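/- arXiv:2310.13311 — 3 statements merged into one kernel-verified Lean document; each statement's English description precedes it below -/
import Mathlib

section
/- Let V ∈ ℝ^{m×m} be symmetric positive definite and let 𝒮 ⊆ ℝ^{m×k} be a compact set. Define the iteration U_{t+1} ∈ argmax_{Ũ∈𝒮} tr(U_tᵀ V Ũ). Then tr(U_{t+1}ᵀ V U_{t+1}) ≥ tr(U_tᵀ V U_t) for all t (monotonicity of the conditional power iteration). -/
/-! The form `⟨X, Y⟩ = tr (Xᵀ V Y)` is symmetric and positive semidefinite, so
`0 ≤ ⟨U - U', U - U'⟩` gives `⟨U', U'⟩ ≥ 2 ⟨U, U'⟩ - ⟨U, U⟩`. Since `U` itself is a competitor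
in the maximisation defining `U'`, `⟨U, U'⟩ ≥ ⟨U, U⟩`, hence `⟨U', U'⟩ ≥ ⟨U, U⟩`. -/

open Matrix

namespace Matrix

variable {m n : Type*} [Fintype m] [Fintype n]

lemma IsSymm.trace_transpose_mul_mul_comm {V : Matrix m m ℝ} (hV : V.IsSymm)
    (A B : Matrix m n ℝ) : trace (Aᵀ * V * B) = trace (Bᵀ * V * A) := by
  rw [← trace_transpose, transpose_mul, transpose_mul, transpose_transpose, hV.eq,
    Matrix.mul_assoc]

lemma PosSemidef.trace_transpose_mul_mul_self_nonneg {V : Matrix m m ℝ} (hV : V.PosSemidef)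
    (A : Matrix m n ℝ) : 0 ≤ trace (Aᵀ * V * A) :=
  (hV.conjTranspose_mul_mul_same A).trace_nonneg

lemma PosSemidef.trace_transpose_mul_mul_self_le_of_le {V : Matrix m m ℝ} (hV : V.PosSemidef)
    {A B : Matrix m n ℝ} (h : trace (Aᵀ * V * A) ≤ trace (Aᵀ * V * B)) :
    trace (Aᵀ * V * A) ≤ trace (Bᵀ * V * B) := by
  have hdiff := hV.trace_transpose_mul_mul_self_nonneg (A - B)
  have hsymm := (isHermitian_iff_isSymm.mp hV.isHermitian).trace_transpose_mul_mul_comm A B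
  simp only [transpose_sub, Matrix.sub_mul, Matrix.mul_sub, trace_sub] at hdiff
  linarith

end Matrix

theorem stmt4_general (m k : ℕ) (V : Matrix (Fin m) (Fin m) ℝ) (hV : V.PosDef)
    (S : Set (Matrix (Fin m) (Fin k) ℝ))
    (U : ℕ → Matrix (Fin m) (Fin k) ℝ)
    (hmem : ∀ t, U t ∈ S)
    (hmax : ∀ t, ∀ W ∈ S,
      Matrix.trace ((U t)ᵀ * V * W) ≤ Matrix.trace ((U t)ᵀ * V * (U (t + 1)))) :
    ∀ t, Matrix.trace ((U t)ᵀ * V * (U t)) ≤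
      Matrix.trace ((U (t + 1))ᵀ * V * (U (t + 1))) :=
  fun t => hV.posSemidef.trace_transpose_mul_mul_self_le_of_le (hmax t (U t) (hmem t))

theorem stmt4 (m k : ℕ) (V : Matrix (Fin m) (Fin m) ℝ) (hV : V.PosDef)
    (S : Set (Matrix (Fin m) (Fin k) ℝ)) (hS : IsCompact S)
    (U : ℕ → Matrix (Fin m) (Fin k) ℝ)
    (hmem : ∀ t, U t ∈ S)
    (hmax : ∀ t, ∀ W ∈ S,
      Matrix.trace ((U t)ᵀ * V * W) ≤ Matrix.trace ((U t)ᵀ * V * (U (t + 1)))) :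
    ∀ t, Matrix.trace ((U t)ᵀ * V * (U t)) ≤
      Matrix.trace ((U (t + 1))ᵀ * V * (U (t + 1))) :=
  stmt4_general m k V hV S U hmem hmax
end

section
/- Let V ∈ ℝ^{m×m} be symmetric positive definite, 𝒮 ⊆ ℝ^{m×k} compact and nonempty, and let (U_t) be generated by the conditional power iteration U_{t+1} ∈ argmax_{Ũ∈𝒮} tr(U_tᵀ V Ũ). Then the sequence of objective values tr(U_tᵀ V U_t) converges as t → ∞. -/
open Matrix Filter

/-! With `⟪A, B⟫ = tr (Aᵀ V B)`, expanding `0 ≤ ⟪U_{t+1} - U_t, U_{t+1} - U_t⟫` and using the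
ascent step `⟪U_t, U_t⟫ ≤ ⟪U_t, U_{t+1}⟫` shows that the objective is nondecreasing along the
iteration. It is bounded above by its maximum over the compact set `S`, hence converges. -/

theorem Matrix.PosSemidef.trace_transpose_mul_mul_self_le {n p : Type*} [Fintype n] [Fintype p]
    {V : Matrix n n ℝ} (hV : V.PosSemidef) {A B : Matrix n p ℝ}
    (h : trace (Aᵀ * V * A) ≤ trace (Aᵀ * V * B)) :
    trace (Aᵀ * V * A) ≤ trace (Bᵀ * V * B) := by
  have hdiff : 0 ≤ trace ((B - A)ᵀ * V * (B - A)) := by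
    simpa only [conjTranspose_eq_transpose_of_trivial] using
      (hV.conjTranspose_mul_mul_same (B - A)).trace_nonneg
  have hsymm : trace (Bᵀ * V * A) = trace (Aᵀ * V * B) := by
    rw [← trace_transpose, transpose_mul, transpose_mul, transpose_transpose,
      (isHermitian_iff_isSymm.mp hV.isHermitian).eq, Matrix.mul_assoc]
  simp only [transpose_sub, Matrix.sub_mul, Matrix.mul_sub, trace_sub] at hdiff
  linarith

theorem stmt5_general (m k : ℕ) (V : Matrix (Fin m) (Fin m) ℝ) (hV : V.PosDef)
    (S : Set (Matrix (Fin m) (Fin k) ℝ)) (hS : IsCompact S)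
    (U : ℕ → Matrix (Fin m) (Fin k) ℝ)
    (hmem : ∀ t, U t ∈ S)
    (hmax : ∀ t, ∀ W ∈ S,
      Matrix.trace ((U t)ᵀ * V * W) ≤ Matrix.trace ((U t)ᵀ * V * (U (t + 1)))) :
    ∃ L : ℝ, Tendsto (fun t => Matrix.trace ((U t)ᵀ * V * (U t))) atTop (nhds L) := by
  set q : Matrix (Fin m) (Fin k) ℝ → ℝ := fun A => trace (Aᵀ * V * A)
  have hmono : Monotone (q ∘ U) := monotone_nat_of_le_succ fun t =>
    hV.posSemidef.trace_transpose_mul_mul_self_le (hmax t (U t) (hmem t))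
  have hq : Continuous q := by fun_prop
  have hbdd : BddAbove (Set.range (q ∘ U)) :=
    (hS.bddAbove_image hq.continuousOn).mono <| by
      rintro _ ⟨t, rfl⟩
      exact ⟨U t, hmem t, rfl⟩
  exact ⟨_, tendsto_atTop_ciSup hmono hbdd⟩

theorem stmt5 (m k : ℕ) (V : Matrix (Fin m) (Fin m) ℝ) (hV : V.PosDef)
    (S : Set (Matrix (Fin m) (Fin k) ℝ)) (hS : IsCompact S) (hSne : S.Nonempty)
    (U : ℕ → Matrix (Fin m) (Fin k) ℝ)
    (hmem : ∀ t, U t ∈ S)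
    (hmax : ∀ t, ∀ W ∈ S,
      Matrix.trace ((U t)ᵀ * V * W) ≤ Matrix.trace ((U t)ᵀ * V * (U (t + 1)))) :
    ∃ L : ℝ, Tendsto (fun t => Matrix.trace ((U t)ᵀ * V * (U t))) atTop (nhds L) :=
  stmt5_general m k V hV S hS U hmem hmax
end

section
/- Let V be symmetric positive definite and 𝒮 compact, and let (U_t) be generated by the conditional power iteration. Then for every ε > 0 there exists T ∈ ℕ such that Σ_{t=T}^∞ ‖U_{t+1} − U_t‖²_F ≤ ε. In particular, ‖U_{t+1} − U_t‖_F → 0. -/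
/-!
Write `q X = tr (Xᵀ V X)`. Testing the maximality of `U (t + 1)` against the competitor `U t`
gives `tr ((U t)ᵀ V U (t + 1)) ≥ q (U t)`, and polarization turns this into the ascent inequality
`q (U (t + 1) - U t) ≤ q (U (t + 1)) - q (U t)`. So `q ∘ U` increases, is bounded on the compact
`S`, and its increments telescope to a convergent series; since `V ≥ c • 1` for some `c > 0`,
the squared Frobenius norms of the increments are summable as well.
-/

open Matrix Filter
open scoped MatrixOrder ComplexOrder

lemma Matrix.PosDef.exists_pos_algebraMap_le {𝕜 n : Type*} [RCLike 𝕜] [Fintype n] [DecidableEq n]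
    {A : Matrix n n 𝕜} (hA : A.PosDef) : ∃ c > 0, algebraMap ℝ (Matrix n n 𝕜) c ≤ A := by
  rcases subsingleton_or_nontrivial (Matrix n n 𝕜) with _ | _
  · exact ⟨1, one_pos, (Subsingleton.elim _ _).le⟩
  · exact (CFC.exists_pos_algebraMap_le_iff hA.isHermitian.isSelfAdjoint).2
      fun _ hx => (isStrictlyPositive_iff_posDef.2 hA).spectrum_pos hx

lemma Matrix.PosDef.exists_pos_mul_trace_le {n k : Type*} [Fintype n] [DecidableEq n] [Fintype k]
    {V : Matrix n n ℝ} (hV : V.PosDef) :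
    ∃ c > 0, ∀ X : Matrix n k ℝ, c * (Xᵀ * X).trace ≤ (Xᵀ * V * X).trace := by
  obtain ⟨c, hc, hcV⟩ := hV.exists_pos_algebraMap_le
  refine ⟨c, hc, fun X => ?_⟩
  have := ((le_iff.1 hcV).conjTranspose_mul_mul_same X).trace_nonneg
  rw [conjTranspose_eq_transpose_of_trivial, Matrix.mul_sub, Matrix.sub_mul, trace_sub,
    Algebra.algebraMap_eq_smul_one, Matrix.mul_smul, Matrix.mul_one, Matrix.smul_mul, trace_smul,
    smul_eq_mul] at this
  linarith

lemma Matrix.IsSymm.trace_sub_le_of_trace_le {n k R : Type*} [Fintype n] [Fintype k]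
    [CommRing R] [PartialOrder R] [IsOrderedRing R] {V : Matrix n n R} (hV : V.IsSymm)
    {X Y : Matrix n k R} (h : (Xᵀ * V * X).trace ≤ (Xᵀ * V * Y).trace) :
    ((Y - X)ᵀ * V * (Y - X)).trace ≤ (Yᵀ * V * Y).trace - (Xᵀ * V * X).trace := by
  have hswap : (Yᵀ * V * X).trace = (Xᵀ * V * Y).trace := by
    rw [← trace_transpose, transpose_mul, transpose_mul, transpose_transpose, hV.eq,
      Matrix.mul_assoc]
  have hexpand : ((Y - X)ᵀ * V * (Y - X)).trace =
      (Yᵀ * V * Y).trace + (Xᵀ * V * X).trace - 2 * (Xᵀ * V * Y).trace := by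
    simp only [transpose_sub, Matrix.sub_mul, Matrix.mul_sub, trace_sub, hswap]
    ring
  rw [hexpand]
  linear_combination h + h

lemma summable_of_le_sub_of_bddAbove {d f : ℕ → ℝ} (hd : ∀ t, 0 ≤ d t)
    (hdf : ∀ t, d t ≤ f (t + 1) - f t) (hf : BddAbove (Set.range f)) : Summable d := by
  obtain ⟨B, hB⟩ := hf
  refine summable_of_sum_range_le hd (c := B - f 0) fun n => ?_
  calc ∑ t ∈ Finset.range n, d t ≤ ∑ t ∈ Finset.range n, (f (t + 1) - f t) :=
        Finset.sum_le_sum fun t _ => hdf t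
    _ = f n - f 0 := Finset.sum_range_sub f n
    _ ≤ B - f 0 := by linarith [hB (Set.mem_range_self n)]

lemma Summable.exists_sum_range_add_le {d : ℕ → ℝ} (hd : Summable d) (h0 : ∀ t, 0 ≤ d t)
    {ε : ℝ} (hε : 0 < ε) : ∃ T, ∀ n, ∑ t ∈ Finset.range n, d (T + t) ≤ ε := by
  obtain ⟨T, hT⟩ := ((tendsto_sum_nat_add d).eventually (gt_mem_nhds hε)).exists
  refine ⟨T, fun n => ?_⟩
  calc ∑ t ∈ Finset.range n, d (T + t) = ∑ t ∈ Finset.range n, d (t + T) := by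
        simp only [add_comm]
    _ ≤ ∑' t, d (t + T) :=
        ((summable_nat_add_iff T).2 hd).sum_le_tsum _ fun t _ => h0 _
    _ ≤ ε := hT.le

theorem stmt6 (m k : ℕ) (V : Matrix (Fin m) (Fin m) ℝ) (hV : V.PosDef)
    (S : Set (Matrix (Fin m) (Fin k) ℝ)) (hS : IsCompact S)
    (U : ℕ → Matrix (Fin m) (Fin k) ℝ)
    (hmem : ∀ t, U t ∈ S)
    (hmax : ∀ t, ∀ W ∈ S,
      Matrix.trace ((U t)ᵀ * V * W) ≤ Matrix.trace ((U t)ᵀ * V * (U (t + 1)))) :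
    (∀ ε > (0 : ℝ), ∃ T : ℕ, ∀ n : ℕ,
      ∑ t ∈ Finset.range n,
        Matrix.trace ((U (T + t + 1) - U (T + t))ᵀ * (U (T + t + 1) - U (T + t))) ≤ ε) ∧
    Tendsto (fun t =>
      Real.sqrt (Matrix.trace ((U (t + 1) - U t)ᵀ * (U (t + 1) - U t)))) atTop (nhds 0) := by
  obtain ⟨c, hc, hcV⟩ := hV.exists_pos_mul_trace_le (k := Fin k)
  set f := fun t => ((U t)ᵀ * V * U t).trace
  set d := fun t => ((U (t + 1) - U t)ᵀ * (U (t + 1) - U t)).trace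
  have hd : ∀ t, 0 ≤ d t := fun t =>
    (posSemidef_conjTranspose_mul_self (U (t + 1) - U t)).trace_nonneg
  have hf : BddAbove (Set.range f) := by
    refine BddAbove.mono ?_ (hS.bddAbove_image (f := fun W => (Wᵀ * V * W).trace) (by fun_prop))
    rintro _ ⟨t, rfl⟩
    exact ⟨U t, hmem t, rfl⟩
  have hascent : ∀ t, c * d t ≤ f (t + 1) - f t := fun t =>
    (hcV _).trans ((isHermitian_iff_isSymm.1 hV.isHermitian).trace_sub_le_of_trace_le
      (hmax t (U t) (hmem t)))
  have hsum : Summable d := (summable_mul_left_iff hc.ne').1 <|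
    summable_of_le_sub_of_bddAbove (fun t => mul_nonneg hc.le (hd t)) hascent hf
  exact ⟨fun ε hε => hsum.exists_sum_range_add_le hd hε,
    by simpa only [Real.sqrt_zero] using hsum.tendsto_atTop_zero.sqrt⟩
end
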